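/- Work in the ring of formal power series in z over the field ℚ(t) of rational functions. Let H_n(e) denote the number of acyclic digraphs with vertex set {1,…,n} and exactly e edges, let Y_n(t) = ∑_e H_n(e) t^e, and let Z(z,t) = ∑_{n=0}^∞ z^n / (n!·(1+t)^{C(n,2)}), where C(n,2) = n(n−1)/2. Then ∑_{n=0}^∞ Y_n(t)·z^n / (n!·(1+t)^{C(n,2)}) = 1 / Z(−z,t), i.e., the power series ∑_{n=0}^∞ Y_n(t)·z^n/(n!·(1+t)^{C(n,2)}) is the multiplicative inverse of Z(−z,t). -/

import Mathlib

/-- An edge set `E` on vertex set `Fin n` contains a directed cycle if there are `j ≥ 2`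
distinct vertices `k 0, …, k (j-1)` with all consecutive (cyclic) pairs being edges. -/
def HasDicycle {n : ℕ} (E : Finset (Fin n × Fin n)) : Prop :=
  ∃ j : ℕ, 2 ≤ j ∧ ∃ k : ZMod j → Fin n, Function.Injective k ∧
    ∀ a : ZMod j, (k a, k (a + 1)) ∈ E

/-- An acyclic digraph on `Fin n`: a set of ordered pairs with distinct components
(no loops), containing no directed cycle. -/
def IsAcyclicDigraph {n : ℕ} (E : Finset (Fin n × Fin n)) : Prop :=
  (∀ e ∈ E, e.1 ≠ e.2) ∧ ¬ HasDicycle E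

/-- `H n e`: the number of acyclic digraphs with vertex set `{1, …, n}` and exactly
`e` edges. -/
noncomputable def acyclicDigraphCount (n e : ℕ) : ℕ :=
  Nat.card {E : Finset (Fin n × Fin n) // IsAcyclicDigraph E ∧ E.card = e}

/-- `Y n = ∑_e H_n(e) tᵉ`, the generating polynomial (as an element of `ℚ(t)`) counting
acyclic digraphs on `{1, …, n}` by number of edges.  (An acyclic digraph on `n` vertices
has at most `n²` edges, so the sum below captures all nonzero terms.) -/
noncomputable def acyclicGenPoly (n : ℕ) : RatFunc ℚ :=
  ∑ e ∈ Finset.range (n * n + 1), (acyclicDigraphCount n e : RatFunc ℚ) * RatFunc.X ^ e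

/-!
Multiplying the `n`-th coefficient of the product by `n! (1+t)^C(n,2)` turns the claim into
`∑ₖ (-1)^k C(n,k) (1+t)^(k(n-k)) Y_{n-k} = [n = 0]`, which is inclusion–exclusion over a set `S`
of vertices required to be sinks. An acyclic digraph in which every vertex of `S` is a sink is
an arbitrary set of edges from `Sᶜ` into `S` together with an acyclic digraph on `Sᶜ`, which
gives the term `(1+t)^(|S| |Sᶜ|) Y_{|Sᶜ|}`. After swapping the sums, a fixed acyclic digraph on `n ≥ 1`
vertices is counted with total sign `∑_{S ⊆ sinks} (-1)^|S| = 0`, since it has a sink: otherwise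
following out-edges from any vertex eventually runs around a directed cycle.
-/

open Finset Function

theorem Function.exists_mem_periodicPts {α : Type*} [Finite α] [Nonempty α] (f : α → α) :
    ∃ x, x ∈ periodicPts f := by
  obtain ⟨i, j, hij, h⟩ :=
    Finite.exists_ne_map_eq_of_infinite fun i : ℕ => f^[i] (Classical.arbitrary α)
  wlog hlt : i < j generalizing i j
  · exact this j i hij.symm h.symm (by omega)
  refine ⟨f^[i] (Classical.arbitrary α), j - i, by omega, ?_⟩
  rw [IsPeriodicPt, IsFixedPt, ← iterate_add_apply, Nat.sub_add_cancel hlt.le, h]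

section Digraph

variable {m n : ℕ} {E E' : Finset (Fin n × Fin n)}

theorem HasDicycle.mono (hE : HasDicycle E') (h : E' ⊆ E) : HasDicycle E := by
  obtain ⟨j, hj, k, hk, hkE⟩ := hE
  exact ⟨j, hj, k, hk, fun a => h (hkE a)⟩

theorem IsAcyclicDigraph.subset (hE : IsAcyclicDigraph E) (h : E' ⊆ E) : IsAcyclicDigraph E' :=
  ⟨fun e he => hE.1 e (h he), fun hd => hE.2 (hd.mono h)⟩

theorem isAcyclicDigraph_empty : IsAcyclicDigraph (∅ : Finset (Fin n × Fin n)) :=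
  ⟨fun _ he => absurd he (notMem_empty _), fun ⟨_, _, _, _, hkE⟩ => notMem_empty _ (hkE 0)⟩

/-- The cycle is the orbit of `x`, indexed by `ZMod (minimalPeriod f x)`; `f x ≠ x` makes its
length at least `2`. -/
theorem hasDicycle_of_mem_periodicPts {f : Fin n → Fin n} (hf : ∀ v, (v, f v) ∈ E) {x : Fin n}
    (hx : x ∈ periodicPts f) (hfix : f x ≠ x) : HasDicycle E := by
  have hp : 2 ≤ minimalPeriod f x := by
    have := minimalPeriod_pos_of_mem_periodicPts hx
    have : minimalPeriod f x ≠ 1 := fun h => hfix (minimalPeriod_eq_one_iff_isFixedPt.mp h)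
    omega
  have : NeZero (minimalPeriod f x) := ⟨by omega⟩
  refine ⟨_, hp, fun a => f^[a.val] x, fun a b hab => ?_, fun a => ?_⟩
  · exact ZMod.val_injective _
      (iterate_injOn_Iio_minimalPeriod (ZMod.val_lt a) (ZMod.val_lt b) hab)
  · have hsucc : (a + 1).val = (a.val + 1) % minimalPeriod f x := by
      rw [← ZMod.val_natCast, Nat.cast_add, ZMod.natCast_zmod_val, Nat.cast_one]
    dsimp only
    rw [hsucc, iterate_mod_minimalPeriod_eq, iterate_succ_apply']
    exact hf (f^[a.val] x)

theorem IsAcyclicDigraph.exists_sink (hE : IsAcyclicDigraph E) (hn : 0 < n) :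
    ∃ v, ∀ e ∈ E, e.1 ≠ v := by
  by_contra! h
  choose e heE he using h
  have hf : ∀ v, (v, (e v).2) ∈ E := fun v =>
    (Prod.ext (he v) rfl : e v = (v, (e v).2)) ▸ heE v
  have : Nonempty (Fin n) := ⟨⟨0, hn⟩⟩
  obtain ⟨x, hx⟩ := exists_mem_periodicPts fun v => (e v).2
  exact hE.2 (hasDicycle_of_mem_periodicPts hf hx fun h => hE.1 _ (hf x) h.symm)

theorem hasDicycle_map_iff (φ : Fin m ↪ Fin n) {E : Finset (Fin m × Fin m)} :
    HasDicycle (E.map (φ.prodMap φ)) ↔ HasDicycle E := by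
  constructor
  · rintro ⟨j, hj, k, hk, hkE⟩
    have hrange : ∀ a, ∃ v, φ v = k a := fun a => by
      obtain ⟨e, -, he⟩ := mem_map.1 (hkE a)
      exact ⟨e.1, congrArg Prod.fst he⟩
    choose k' hk' using hrange
    refine ⟨j, hj, k', fun a b h => hk (by rw [← hk', ← hk', h]), fun a => ?_⟩
    have := hkE a
    rw [← hk', ← hk'] at this
    exact (mem_map' (φ.prodMap φ)).1 this
  · rintro ⟨j, hj, k, hk, hkE⟩
    exact ⟨j, hj, φ ∘ k, φ.injective.comp hk, fun a => mem_map_of_mem _ (hkE a)⟩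

theorem isAcyclicDigraph_map_iff (φ : Fin m ↪ Fin n) {E : Finset (Fin m × Fin m)} :
    IsAcyclicDigraph (E.map (φ.prodMap φ)) ↔ IsAcyclicDigraph E := by
  simp only [IsAcyclicDigraph, hasDicycle_map_iff, forall_mem_map, Embedding.coe_prodMap,
    Prod.map_fst, Prod.map_snd, φ.injective.ne_iff]

/-- A directed cycle leaves every vertex it visits, so when all edges start in `T` it stays
inside `T`. -/
theorem HasDicycle.inter_product {T : Finset (Fin n)} (hd : HasDicycle E) (hE : E ⊆ T ×ˢ univ) :
    HasDicycle (E ∩ T ×ˢ T) := by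
  obtain ⟨j, hj, k, hk, hkE⟩ := hd
  have hT : ∀ a, k a ∈ T := fun a => (mem_product.1 (hE (hkE a))).1
  exact ⟨j, hj, k, hk, fun a => mem_inter.2 ⟨hkE a, mem_product.2 ⟨hT a, hT (a + 1)⟩⟩⟩

theorem isAcyclicDigraph_inter_product_iff {T : Finset (Fin n)} (hE : E ⊆ T ×ˢ univ) :
    IsAcyclicDigraph (E ∩ T ×ˢ T) ↔ IsAcyclicDigraph E := by
  refine ⟨fun h => ⟨fun e he hloop => ?_, fun hd => h.2 (hd.inter_product hE)⟩,
    fun h => h.subset inter_subset_left⟩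
  have he₁ : e.1 ∈ T := (mem_product.1 (hE he)).1
  exact h.1 e (mem_inter.2 ⟨he, mem_product.2 ⟨he₁, hloop ▸ he₁⟩⟩) hloop

end Digraph

theorem Finset.sum_powerset_union_mul {α R : Type*} [DecidableEq α] [CommSemiring R]
    {A B : Finset α} (h : Disjoint A B) (f g : Finset α → R) :
    ∑ E ∈ (A ∪ B).powerset, f (E ∩ A) * g (E ∩ B) =
      (∑ E ∈ A.powerset, f E) * ∑ E ∈ B.powerset, g E := by
  rw [sum_mul_sum, ← sum_product']
  refine sum_nbij' (fun E => (E ∩ A, E ∩ B)) (fun p => p.1 ∪ p.2) ?_ ?_ ?_ ?_ fun _ _ => rfl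
  · intro E _
    simp
  · rintro ⟨E₁, E₂⟩ hE
    simp only [mem_product, mem_powerset] at hE ⊢
    exact union_subset_union hE.1 hE.2
  · intro E hE
    rw [mem_powerset] at hE
    rw [← inter_union_distrib_left, inter_eq_left.2 hE]
  · rintro ⟨E₁, E₂⟩ hE
    simp only [mem_product, mem_powerset] at hE
    have h₁ : Disjoint E₁ B := disjoint_of_subset_left hE.1 h
    have h₂ : Disjoint E₂ A := disjoint_of_subset_left hE.2 h.symm
    simp only [union_inter_distrib_right, inter_eq_left.2 hE.1, inter_eq_left.2 hE.2,
      disjoint_iff_inter_eq_empty.1 h₁, disjoint_iff_inter_eq_empty.1 h₂, union_empty,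
      empty_union]

theorem Nat.add_choose_two (i j : ℕ) : (i + j).choose 2 = i.choose 2 + j.choose 2 + i * j := by
  induction j with
  | zero => rfl
  | succ j ih =>
    rw [← add_assoc, Nat.choose_succ_succ', ih, Nat.choose_succ_succ' j, Nat.choose_one_right,
      Nat.choose_one_right]
    ring

section Weight

open scoped Classical

variable {R : Type*} (x : R) {m n : ℕ}

noncomputable def acyclicWeight [CommSemiring R] (V : Finset (Fin n)) : R :=
  ∑ E ∈ (V ×ˢ V).powerset with IsAcyclicDigraph E, x ^ #E

section CommSemiring

variable [CommSemiring R]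

@[simp]
theorem acyclicWeight_empty : acyclicWeight x (∅ : Finset (Fin n)) = 1 := by
  simp [acyclicWeight, filter_singleton, isAcyclicDigraph_empty]

theorem acyclicWeight_map (φ : Fin m ↪ Fin n) (V : Finset (Fin m)) :
    acyclicWeight x (V.map φ) = acyclicWeight x V := by
  have hset : ((V.map φ ×ˢ V.map φ).powerset.filter IsAcyclicDigraph) =
      ((V ×ˢ V).powerset.filter IsAcyclicDigraph).map
        (mapEmbedding (φ.prodMap φ)).toEmbedding := by
    ext E'
    simp only [mem_filter, mem_powerset, mem_map, ← prodMap_map_product, subset_map_iff,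
      RelEmbedding.coe_toEmbedding, mapEmbedding_apply]
    constructor
    · rintro ⟨⟨E, hE, rfl⟩, hacyc⟩
      exact ⟨E, ⟨hE, (isAcyclicDigraph_map_iff φ).1 hacyc⟩, rfl⟩
    · rintro ⟨E, ⟨hE, hacyc⟩, rfl⟩
      exact ⟨⟨E, hE, rfl⟩, (isAcyclicDigraph_map_iff φ).2 hacyc⟩
  simp only [acyclicWeight, hset, sum_map, RelEmbedding.coe_toEmbedding, mapEmbedding_apply,
    card_map]

theorem acyclicWeight_eq_univ {V : Finset (Fin n)} (hV : #V = m) :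
    acyclicWeight x V = acyclicWeight x (univ : Finset (Fin m)) := by
  rw [← map_orderEmbOfFin_univ V hV]
  exact acyclicWeight_map x _ _

theorem sum_acyclic_sinks (S : Finset (Fin n)) :
    ∑ E ∈ (Sᶜ ×ˢ univ).powerset with IsAcyclicDigraph E, x ^ #E =
      (1 + x) ^ (#Sᶜ * #S) * acyclicWeight x Sᶜ := by
  have hsplit : Sᶜ ×ˢ univ = Sᶜ ×ˢ S ∪ Sᶜ ×ˢ Sᶜ := by rw [← product_union, union_compl]
  have hdisj : Disjoint (Sᶜ ×ˢ S) (Sᶜ ×ˢ Sᶜ) := disjoint_product.2 (Or.inr disjoint_compl_right)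
  have hbinom : ∑ E ∈ (Sᶜ ×ˢ S).powerset, x ^ #E = (1 + x) ^ #(Sᶜ ×ˢ S) := by
    simpa [add_comm] using sum_pow_mul_eq_add_pow x 1 (Sᶜ ×ˢ S)
  calc ∑ E ∈ (Sᶜ ×ˢ univ).powerset with IsAcyclicDigraph E, x ^ #E
      = ∑ E ∈ (Sᶜ ×ˢ S ∪ Sᶜ ×ˢ Sᶜ).powerset, x ^ #(E ∩ Sᶜ ×ˢ S) *
          if IsAcyclicDigraph (E ∩ Sᶜ ×ˢ Sᶜ) then x ^ #(E ∩ Sᶜ ×ˢ Sᶜ) else 0 := by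
        rw [sum_filter, ← hsplit]
        refine sum_congr rfl fun E hE => ?_
        rw [mem_powerset] at hE
        have hunion : E ∩ Sᶜ ×ˢ S ∪ E ∩ Sᶜ ×ˢ Sᶜ = E := by
          rw [← inter_union_distrib_left, ← hsplit, inter_eq_left.2 hE]
        have hcard : #(E ∩ Sᶜ ×ˢ S) + #(E ∩ Sᶜ ×ˢ Sᶜ) = #E := by
          rw [← card_union_of_disjoint (hdisj.mono inter_subset_right inter_subset_right),
            hunion]
        rw [isAcyclicDigraph_inter_product_iff hE, mul_ite, mul_zero, ← pow_add, hcard]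
    _ = (1 + x) ^ (#Sᶜ * #S) * acyclicWeight x Sᶜ := by
        rw [sum_powerset_union_mul hdisj (x ^ #·)
            fun E => if IsAcyclicDigraph E then x ^ #E else 0, hbinom, card_product, acyclicWeight, sum_filter]

end CommSemiring

section CommRing

variable [CommRing R]

theorem alternating_sum_acyclic_sinks (hn : 0 < n) :
    ∑ S : Finset (Fin n), (-1) ^ #S * ∑ E ∈ (Sᶜ ×ˢ univ).powerset with IsAcyclicDigraph E,
      x ^ #E = 0 := by
  simp_rw [mul_sum]
  rw [sum_comm' (t' := (univ ×ˢ univ).powerset.filter IsAcyclicDigraph)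
    (s' := fun E => (univ.filter fun v => ∀ e ∈ E, e.1 ≠ v).powerset)]
  · refine sum_eq_zero fun E hE => ?_
    obtain ⟨v, hv⟩ := (mem_filter.1 hE).2.exists_sink hn
    have hsinks := sum_powerset_neg_one_pow_card_of_nonempty
      (x := univ.filter fun v => ∀ e ∈ E, e.1 ≠ v) ⟨v, mem_filter.2 ⟨mem_univ v, hv⟩⟩
    rw [← sum_mul]
    exact mul_eq_zero_of_left (by exact_mod_cast congrArg (Int.cast : ℤ → R) hsinks) _
  · intro S E
    simp only [mem_univ, true_and, mem_filter, mem_powerset, subset_iff, mem_product, mem_compl]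
    grind

theorem acyclicWeight_recurrence (n : ℕ) :
    ∑ p ∈ antidiagonal n, (-1) ^ p.1 * n.choose p.1 * (1 + x) ^ (p.2 * p.1) *
      acyclicWeight x (univ : Finset (Fin p.2)) = if n = 0 then 1 else 0 := by
  rcases n.eq_zero_or_pos with rfl | hn
  · simp [univ_eq_empty]
  rw [if_neg hn.ne', ← alternating_sum_acyclic_sinks x hn]
  have hcompl : ∀ S : Finset (Fin n),
      acyclicWeight x Sᶜ = acyclicWeight x (univ : Finset (Fin (n - #S))) :=
    fun S => acyclicWeight_eq_univ x (V := Sᶜ) (by rw [card_compl, Fintype.card_fin])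
  simp_rw [sum_acyclic_sinks, hcompl, card_compl, Fintype.card_fin]
  have hsubsets := sum_powerset_apply_card (x := (univ : Finset (Fin n)))
    fun k => (-1) ^ k * ((1 + x) ^ ((n - k) * k) * acyclicWeight x (univ : Finset (Fin (n - k))))
  rw [powerset_univ] at hsubsets
  refine Eq.symm (hsubsets.trans ?_)
  rw [Nat.sum_antidiagonal_eq_sum_range_succ
      fun i j => (-1) ^ i * n.choose i * (1 + x) ^ (j * i) *
        acyclicWeight x (univ : Finset (Fin j))]
  simp only [card_univ, Fintype.card_fin, nsmul_eq_mul]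
  exact sum_congr rfl fun k _ => by ring

end CommRing

end Weight

theorem acyclicGenPoly_eq_acyclicWeight (n : ℕ) :
    acyclicGenPoly n = acyclicWeight RatFunc.X (univ : Finset (Fin n)) := by
  classical
  have hcard : ∀ E ∈ (univ ×ˢ univ : Finset (Fin n × Fin n)).powerset.filter
      IsAcyclicDigraph, #E ∈ range (n * n + 1) :=
    fun E _ => mem_range.2 (Nat.lt_succ_of_le (by simpa using card_le_univ E))
  rw [acyclicWeight, ← sum_fiberwise_of_maps_to hcard, acyclicGenPoly]
  refine sum_congr rfl fun e _ => ?_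
  rw [sum_congr rfl fun E hE => by rw [(mem_filter.1 hE).2], sum_const, nsmul_eq_mul,
    acyclicDigraphCount, Nat.card_eq_fintype_card, Fintype.card_subtype, filter_filter,
    univ_product_univ, powerset_univ]

open Nat in
theorem PowerSeries.mk_mul_mk_eq_one_of_sum_antidiagonal {K : Type*} [Field K] [CharZero K]
    {q : K} (hq : q ≠ 0) {a : ℕ → K}
    (h : ∀ n, ∑ p ∈ antidiagonal n, (-1) ^ p.1 * n.choose p.1 * q ^ (p.2 * p.1) * a p.2 =
      if n = 0 then 1 else 0) :
    mk (fun n => a n / (n ! * q ^ n.choose 2)) * mk (fun n => (-1) ^ n / (n ! * q ^ n.choose 2))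
      = 1 := by
  ext n
  have hc : (n ! * q ^ n.choose 2 : K) ≠ 0 :=
    mul_ne_zero (Nat.cast_ne_zero.2 n.factorial_ne_zero) (pow_ne_zero _ hq)
  have hδ : (if n = 0 then (1 : K) else 0) =
      (if n = 0 then 1 else 0) / (n ! * q ^ n.choose 2) := by
    split_ifs with h0 <;> simp [h0]
  rw [mul_comm, coeff_mul, coeff_one, hδ, ← h n, sum_div]
  refine sum_congr rfl fun ⟨i, j⟩ hij => ?_
  obtain rfl := mem_antidiagonal.1 hij
  have hfac : ((i + j)! : K) = (i + j).choose i * i ! * j ! := by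
    rw [Nat.choose_symm_add]
    exact_mod_cast (Nat.add_choose_mul_factorial_mul_factorial i j).symm
  have hchoose : ((i + j).choose i : K) ≠ 0 :=
    Nat.cast_ne_zero.2 (Nat.choose_pos (Nat.le_add_right i j)).ne'
  simp only [coeff_mk]
  rw [hfac, Nat.add_choose_two, pow_add, pow_add]
  field_simp
  ring

/-- In the ring of formal power series in `z` over `ℚ(t)`, with
`Z(z,t) = ∑ₙ zⁿ/(n!·(1+t)^C(n,2))`, the series `∑ₙ Yₙ(t)·zⁿ/(n!·(1+t)^C(n,2))` is the
multiplicative inverse of `Z(−z,t)`. -/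
theorem acyclic_generating_function_inverse :
    (PowerSeries.mk fun n : ℕ =>
        acyclicGenPoly n / ((n.factorial : RatFunc ℚ) * (1 + RatFunc.X) ^ n.choose 2))
      * (PowerSeries.mk fun n : ℕ =>
          (-1 : RatFunc ℚ) ^ n / ((n.factorial : RatFunc ℚ) * (1 + RatFunc.X) ^ n.choose 2))
      = 1 := by
  have hX : (1 + RatFunc.X : RatFunc ℚ) ≠ 0 := by
    have := RatFunc.algebraMap_ne_zero (Polynomial.X_add_C_ne_zero (1 : ℚ))
    rwa [map_add, RatFunc.algebraMap_X, RatFunc.algebraMap_C, map_one, add_comm] at this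
  refine PowerSeries.mk_mul_mk_eq_one_of_sum_antidiagonal hX fun n => ?_
  simp_rw [acyclicGenPoly_eq_acyclicWeight]
  exact acyclicWeight_recurrence _ n
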